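/- Define H(θ, θ₀) = e^{(μ/σ²)θ} ( Ξ cosh(Ξ(k−θ)) + (μ/σ²) sinh(Ξ(k−θ)) ) − Ξ e^{(μ/σ²)k} ξ(θ₀). Then H(θ, θ₀) ≥ 0 for all 0 ≤ θ ≤ θ₀ < k, H is strictly decreasing in θ on [0,θ₀] and θ₀ ↦ H(θ₀,θ₀) is strictly decreasing, and the infimum of H over {0 ≤ θ ≤ θ₀ < k} equals 0, attained in the limit θ = θ₀ = k. -/

import Mathlib

open Real Set

noncomputable section

/-- `Ξ = sqrt(2r/σ² + μ²/σ⁴)`. -/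
def Xi (r μ σ : ℝ) : ℝ := Real.sqrt (2 * r / σ ^ 2 + μ ^ 2 / σ ^ 4)

/-- The closed-form expression for the Laplace transform
`ξ(y) = E[e^{-r τ_D(k)} | D_0 = y]` of the drawdown time of a Brownian motion
with drift `μ` and volatility `σ`. -/
def xiFormula (r μ σ k y : ℝ) : ℝ :=
  exp (μ / σ ^ 2 * (y - k)) * (sinh (Xi r μ σ * y) / sinh (Xi r μ σ * k)) +
    exp (μ / σ ^ 2 * y) * (sinh (Xi r μ σ * (k - y)) / sinh (Xi r μ σ * k)) *
      (exp (-(μ / σ ^ 2) * k) * Xi r μ σ /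
        (Xi r μ σ * cosh (Xi r μ σ * k) - μ / σ ^ 2 * sinh (Xi r μ σ * k)))

/-- `H(θ,θ₀) = e^{(μ/σ²)θ}(Ξ cosh(Ξ(k-θ)) + (μ/σ²) sinh(Ξ(k-θ))) - Ξ e^{(μ/σ²)k} ξ(θ₀)`. -/
def Hfun (r μ σ k θ θ₀ : ℝ) : ℝ :=
  exp (μ / σ ^ 2 * θ) *
      (Xi r μ σ * cosh (Xi r μ σ * (k - θ)) + μ / σ ^ 2 * sinh (Xi r μ σ * (k - θ))) -
    Xi r μ σ * exp (μ / σ ^ 2 * k) * xiFormula r μ σ k θ₀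


/-! With `a = μ/σ²` and `X = Ξ > |a|`, put `G(t) = e^{at}(X cosh(X(k-t)) + a sinh(X(k-t)))`
and `φ(t) = e^{at} sinh(X(k-t))`. The closed form of `ξ` satisfies `X e^{ak} ξ = G - K φ` with
`K = (X² - a²) sinh(Xk) / (X cosh(Xk) - a sinh(Xk)) > 0`, so `H(θ, θ₀) = G(θ) - G(θ₀) + K φ(θ₀)`.
Since `G' = (a² - X²) e^{at} sinh(X(k-t)) < 0` on `t < k` and
`φ' = -e^{at}(X cosh - a sinh)(X(k-t)) < 0`, `H` decreases in `θ`, the diagonal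
`H(θ₀, θ₀) = K φ(θ₀)` decreases to `φ(k) = 0`, and `H ≥ K φ(θ₀) ≥ 0`. -/

lemma abs_div_sq_lt_Xi {r μ σ : ℝ} (hσ : σ ≠ 0) (hr : 0 < r) : |μ / σ ^ 2| < Xi r μ σ := by
  rw [Xi, Real.lt_sqrt (abs_nonneg _), sq_abs, div_pow, ← pow_mul]
  have : 0 < 2 * r / σ ^ 2 := by positivity
  linarith

lemma abs_sinh_lt_cosh (x : ℝ) : |sinh x| < cosh x :=
  abs_lt.2 ⟨by simpa [neg_lt] using sinh_lt_cosh (-x), sinh_lt_cosh x⟩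

lemma mul_cosh_sub_mul_sinh_pos {a X : ℝ} (h : |a| < X) (x : ℝ) :
    0 < X * cosh x - a * sinh x := by
  have := calc
    a * sinh x ≤ |a| * |sinh x| := (le_abs_self _).trans (abs_mul _ _).le
    _ ≤ |a| * cosh x := by gcongr; exact (abs_sinh_lt_cosh x).le
    _ < X * cosh x := by gcongr
  linarith

section

variable (a X k : ℝ)

def Gfun (t : ℝ) : ℝ := exp (a * t) * (X * cosh (X * (k - t)) + a * sinh (X * (k - t)))

def phiFun (t : ℝ) : ℝ := exp (a * t) * sinh (X * (k - t))

def phiCoeff : ℝ := (X ^ 2 - a ^ 2) * sinh (X * k) / (X * cosh (X * k) - a * sinh (X * k))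

lemma hasDerivAt_Gfun (t : ℝ) :
    HasDerivAt (Gfun a X k) (exp (a * t) * ((a ^ 2 - X ^ 2) * sinh (X * (k - t)))) t := by
  have hlin : HasDerivAt (fun t => X * (k - t)) (-X) t := by
    simpa using ((hasDerivAt_id t).const_sub k).const_mul X
  have := ((hasDerivAt_id t).const_mul a).exp.mul
    ((hlin.cosh.const_mul X).add (hlin.sinh.const_mul a))
  exact this.congr_deriv (by simp only [id, Pi.add_apply]; ring)

lemma hasDerivAt_phiFun (t : ℝ) :
    HasDerivAt (phiFun a X k) (-(exp (a * t) * (X * cosh (X * (k - t)) - a * sinh (X * (k - t)))))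
      t := by
  have hlin : HasDerivAt (fun t => X * (k - t)) (-X) t := by
    simpa using ((hasDerivAt_id t).const_sub k).const_mul X
  have := ((hasDerivAt_id t).const_mul a).exp.mul hlin.sinh
  exact this.congr_deriv (by simp only [id]; ring)

@[simp]
lemma phiFun_self : phiFun a X k k = 0 := by simp [phiFun]

variable {a X k}

lemma Gfun_strictAntiOn (h : |a| < X) : StrictAntiOn (Gfun a X k) (Iic k) := by
  refine strictAntiOn_of_deriv_neg (convex_Iic k)
    (by unfold Gfun; fun_prop : Continuous (Gfun a X k)).continuousOn fun t ht => ?_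
  rw [interior_Iic, mem_Iio] at ht
  have hsq : a ^ 2 < X ^ 2 := sq_lt_sq' (neg_lt_of_abs_lt h) (lt_of_abs_lt h)
  have hsinh : 0 < sinh (X * (k - t)) :=
    sinh_pos_iff.2 (mul_pos ((abs_nonneg a).trans_lt h) (sub_pos.2 ht))
  rw [(hasDerivAt_Gfun a X k t).deriv]
  exact mul_neg_of_pos_of_neg (exp_pos _) (mul_neg_of_neg_of_pos (by linarith) hsinh)

lemma phiFun_strictAnti (h : |a| < X) : StrictAnti (phiFun a X k) :=
  strictAnti_of_deriv_neg fun t => by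
    rw [(hasDerivAt_phiFun a X k t).deriv, neg_neg_iff_pos]
    exact mul_pos (exp_pos _) (mul_cosh_sub_mul_sinh_pos h _)

lemma phiFun_nonneg (h : |a| < X) {t : ℝ} (ht : t ≤ k) : 0 ≤ phiFun a X k t :=
  phiFun_self a X k ▸ (phiFun_strictAnti h).antitone ht

lemma phiCoeff_pos (h : |a| < X) (hk : 0 < k) : 0 < phiCoeff a X k := by
  have hX : 0 < X := (abs_nonneg a).trans_lt h
  have hsq : a ^ 2 < X ^ 2 := sq_lt_sq' (neg_lt_of_abs_lt h) (lt_of_abs_lt h)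
  exact div_pos (mul_pos (sub_pos.2 hsq) (sinh_pos_iff.2 (mul_pos hX hk)))
    (mul_cosh_sub_mul_sinh_pos h _)

end

/-- Expanding `sinh(Xy) = sinh(Xk) cosh(X(k-y)) - cosh(Xk) sinh(X(k-y))` and using
`cosh² - sinh² = 1` collapses `X e^{ak} ξ(y)` to `G(y) - K φ(y)`. -/
lemma mul_exp_mul_xiFormula_eq {a X k : ℝ} (hs : sinh (X * k) ≠ 0)
    (hD : X * cosh (X * k) - a * sinh (X * k) ≠ 0) (y : ℝ) :
    X * exp (a * k) * (exp (a * (y - k)) * (sinh (X * y) / sinh (X * k)) +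
      exp (a * y) * (sinh (X * (k - y)) / sinh (X * k)) *
        (exp (-a * k) * X / (X * cosh (X * k) - a * sinh (X * k)))) =
      Gfun a X k y - phiCoeff a X k * phiFun a X k y := by
  have hsinh : sinh (X * y) = sinh (X * k) * cosh (X * (k - y)) -
      cosh (X * k) * sinh (X * (k - y)) := by
    rw [← sinh_sub]; ring_nf
  have hexp₁ : exp (a * (y - k)) = exp (a * y) / exp (a * k) := by
    rw [← exp_sub]; ring_nf
  have hexp₂ : exp (-a * k) = 1 / exp (a * k) := by
    rw [neg_mul, exp_neg, one_div]
  rw [hsinh, hexp₁, hexp₂, Gfun, phiFun, phiCoeff]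
  field_simp
  linear_combination (-(X ^ 2 * sinh (X * (k - y)))) * cosh_sq (X * k)

lemma Hfun_eq {r μ σ k : ℝ} (hs : sinh (Xi r μ σ * k) ≠ 0)
    (hD : Xi r μ σ * cosh (Xi r μ σ * k) - μ / σ ^ 2 * sinh (Xi r μ σ * k) ≠ 0) (θ θ₀ : ℝ) :
    Hfun r μ σ k θ θ₀ = Gfun (μ / σ ^ 2) (Xi r μ σ) k θ - Gfun (μ / σ ^ 2) (Xi r μ σ) k θ₀ +
      phiCoeff (μ / σ ^ 2) (Xi r μ σ) k * phiFun (μ / σ ^ 2) (Xi r μ σ) k θ₀ := by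
  rw [Hfun, xiFormula, mul_exp_mul_xiFormula_eq hs hD]
  unfold Gfun
  ring

theorem Hfun_properties (σ μ r k : ℝ) (hσ : 0 < σ) (hr : 0 < r) (hk : 0 < k) :
    -- `H ≥ 0` on `{0 ≤ θ ≤ θ₀ < k}`
    (∀ θ θ₀ : ℝ, 0 ≤ θ → θ ≤ θ₀ → θ₀ < k → 0 ≤ Hfun r μ σ k θ θ₀) ∧
      -- `H` is strictly decreasing in `θ` on `[0, θ₀]`
      (∀ θ₀ ∈ Set.Ico (0 : ℝ) k,
        StrictAntiOn (fun θ => Hfun r μ σ k θ θ₀) (Set.Icc 0 θ₀)) ∧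
      -- `θ₀ ↦ H(θ₀, θ₀)` is strictly decreasing
      StrictAntiOn (fun θ₀ => Hfun r μ σ k θ₀ θ₀) (Set.Ico (0 : ℝ) k) ∧
      -- the infimum of `H` over `{0 ≤ θ ≤ θ₀ < k}` is `0`, attained in the limit `θ = θ₀ = k`
      IsGLB {v : ℝ | ∃ θ θ₀ : ℝ, 0 ≤ θ ∧ θ ≤ θ₀ ∧ θ₀ < k ∧ v = Hfun r μ σ k θ θ₀} 0 := by
  have h := abs_div_sq_lt_Xi (μ := μ) hσ.ne' hr
  set a := μ / σ ^ 2
  set X := Xi r μ σ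
  have hK := phiCoeff_pos h hk
  have hH := Hfun_eq (sinh_pos_iff.2 (mul_pos ((abs_nonneg _).trans_lt h) hk)).ne'
    (mul_cosh_sub_mul_sinh_pos h _).ne'
  have hdiag (y : ℝ) : Hfun r μ σ k y y = phiCoeff a X k * phiFun a X k y := by
    rw [hH]; ring
  have hnonneg (θ θ₀ : ℝ) (h0 : 0 ≤ θ) (h1 : θ ≤ θ₀) (h2 : θ₀ < k) : 0 ≤ Hfun r μ σ k θ θ₀ := by
    rw [hH]
    have := (Gfun_strictAntiOn (k := k) h).antitoneOn (h1.trans h2.le) h2.le h1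
    nlinarith [phiFun_nonneg (k := k) h h2.le]
  refine ⟨hnonneg, fun θ₀ hθ₀ x hx y hy hxy => ?_, fun x _ y _ hxy => ?_,
    isGLB_of_mem_closure ?_ ?_⟩
  · simp only [hH]
    linarith [Gfun_strictAntiOn (k := k) h (hx.2.trans hθ₀.2.le) (hy.2.trans hθ₀.2.le) hxy]
  · simpa only [hdiag] using mul_lt_mul_of_pos_left (phiFun_strictAnti h hxy) hK
  · rintro v ⟨θ, θ₀, h0, h1, h2, rfl⟩
    exact hnonneg θ θ₀ h0 h1 h2
  · have hcont : Continuous fun y => Hfun r μ σ k y y := by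
      simp only [hdiag, phiFun]; fun_prop
    have htend := (hcont.tendsto k).mono_left (nhdsWithin_le_nhds (s := Iio k))
    rw [hdiag, phiFun_self, mul_zero] at htend
    refine mem_closure_of_tendsto htend ?_
    filter_upwards [Ioo_mem_nhdsLT hk] with y hy
    exact ⟨y, y, hy.1.le, le_rfl, hy.2, rfl⟩
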